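/- arXiv:2510.02749 — 2 statements merged into one kernel-verified Lean document; each statement's English description precedes it below -/
import Mathlib

section
/- Let G be a finite connected simple graph and let d, p, and n be nonnegative integers with p < 2d and n ≥ 2. If γ_d^p(G) = ∞, then γ_d^p(G ⊠ P_n) = ∞. -/
open SimpleGraph

/-- The strong product `G ⊠ H` of two simple graphs. -/
def strongProd {α β : Type*} (G : SimpleGraph α) (H : SimpleGraph β) :
    SimpleGraph (α × β) where
  Adj x y := (G.Adj x.1 y.1 ∧ x.2 = y.2) ∨ (x.1 = y.1 ∧ H.Adj x.2 y.2) ∨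
    (G.Adj x.1 y.1 ∧ H.Adj x.2 y.2)
  symm := by
    constructor
    rintro ⟨a, b⟩ ⟨c, e⟩ (⟨h1, h2⟩ | ⟨h1, h2⟩ | ⟨h1, h2⟩)
    · exact Or.inl ⟨h1.symm, h2.symm⟩
    · exact Or.inr (Or.inl ⟨h1.symm, h2.symm⟩)
    · exact Or.inr (Or.inr ⟨h1.symm, h2.symm⟩)
  loopless := by
    constructor
    rintro ⟨a, b⟩ (⟨h1, _⟩ | ⟨_, h2⟩ | ⟨h1, _⟩)
    · exact G.loopless.irrefl a h1
    · exact H.loopless.irrefl b h2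
    · exact G.loopless.irrefl a h1

/-- `S` is a `d`-distance dominating set of `G`: every vertex is within distance `d`
of some vertex of `S`. -/
def IsDistDomSet {V : Type*} (G : SimpleGraph V) (d : ℕ) (S : Finset V) : Prop :=
  ∀ v : V, ∃ u ∈ S, G.dist u v ≤ d

/-- `S` is a `p`-packing of `G`: distinct vertices of `S` are at distance at least `p + 1`. -/
def IsPacking {V : Type*} (G : SimpleGraph V) (p : ℕ) (S : Finset V) : Prop :=
  ∀ x ∈ S, ∀ y ∈ S, x ≠ y → p + 1 ≤ G.dist x y

/-- The `d`-distance `p`-packing domination number `γ_d^p(G)`, an element of `ℕ∞`,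
equal to `⊤` if no `d`-distance dominating `p`-packing exists. -/
noncomputable def distPackDomNum {V : Type*} (G : SimpleGraph V) (d p : ℕ) : ℕ∞ :=
  sInf {n : ℕ∞ | ∃ S : Finset V, n = S.card ∧ IsDistDomSet G d S ∧ IsPacking G p S}

/-- The radius of a graph: the least `k` such that some vertex is within
distance `k` of all vertices. -/
noncomputable def graphRadius {V : Type*} (G : SimpleGraph V) : ℕ :=
  sInf {k : ℕ | ∃ u : V, ∀ v : V, G.dist u v ≤ k}

/-- Project a walk in the strong product to the first factor. -/

lemma proj1_walk {α β : Type*} {G : SimpleGraph α} {H : SimpleGraph β}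
    {x y : α × β} (W : (strongProd G H).Walk x y) :
    ∃ W' : G.Walk x.1 y.1, W'.length ≤ W.length := by
  induction W with
  | nil => exact ⟨SimpleGraph.Walk.nil, le_refl _⟩
  | cons h W ih =>
    obtain ⟨W', hW'⟩ := ih
    have hl := SimpleGraph.Walk.length_cons h W
    rcases h with ⟨h1, _⟩ | ⟨h1, _⟩ | ⟨h1, _⟩
    · exact ⟨W'.cons h1, by simp [SimpleGraph.Walk.length_cons]; omega⟩
    · exact ⟨W'.copy h1.symm rfl, by simp [SimpleGraph.Walk.length_copy, SimpleGraph.Walk.length_cons]; omega⟩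
    · exact ⟨W'.cons h1, by simp [SimpleGraph.Walk.length_cons]; omega⟩

/-- The second coordinates along a walk in `G ⊠ P_n` change by at most one per step. -/
lemma proj2_walk {α : Type*} {G : SimpleGraph α} {n : ℕ}
    {x y : α × Fin n} (W : (strongProd G (pathGraph n)).Walk x y) :
    Nat.dist (x.2 : ℕ) (y.2 : ℕ) ≤ W.length := by
  induction W with
  | nil => simp [Nat.dist_self]
  | @cons u v w h W ih =>
    have h2 : Nat.dist (u.2 : ℕ) (v.2 : ℕ) ≤ 1 := by
      rcases h with ⟨_, h2⟩ | ⟨_, h2⟩ | ⟨_, h2⟩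
      · simp [h2, Nat.dist_self]
      · rcases pathGraph_adj.mp h2 with h3 | h3 <;> simp [Nat.dist] <;> omega
      · rcases pathGraph_adj.mp h2 with h3 | h3 <;> simp [Nat.dist] <;> omega
    calc Nat.dist (u.2 : ℕ) (w.2 : ℕ) ≤ Nat.dist (u.2 : ℕ) (v.2 : ℕ) + Nat.dist (v.2 : ℕ) (w.2 : ℕ) :=
          Nat.dist.triangle_inequality _ _ _
      _ ≤ 1 + W.length := by omega
      _ = (SimpleGraph.Walk.cons h W).length := by simp [SimpleGraph.Walk.length_cons]; omega

lemma path_step {n : ℕ} {b b' : Fin n} (h : (b : ℕ) ≠ (b' : ℕ)) :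
    ∃ c : Fin n, (pathGraph n).Adj b c ∧ Nat.dist (c : ℕ) (b' : ℕ) + 1 = Nat.dist (b : ℕ) (b' : ℕ) := by
  rcases lt_or_gt_of_ne h with hlt | hgt
  · refine ⟨⟨(b : ℕ) + 1, by omega⟩, pathGraph_adj.mpr (Or.inl rfl), ?_⟩
    simp [Nat.dist]; omega
  · have hb : 0 < (b : ℕ) := by omega
    refine ⟨⟨(b : ℕ) - 1, by omega⟩, pathGraph_adj.mpr (Or.inr (by simp; omega)), ?_⟩
    simp [Nat.dist]; omega

/-- Lift a walk vertically. -/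
lemma lift_vert {α : Type*} {G : SimpleGraph α} {n : ℕ} (a : α) :
    ∀ (k : ℕ) (b b' : Fin n), Nat.dist (b : ℕ) (b' : ℕ) = k →
    ∃ W' : (strongProd G (pathGraph n)).Walk (a, b) (a, b'), W'.length ≤ k := by
  intro k
  induction k with
  | zero =>
    intro b b' hd
    have : b = b' := Fin.ext (Nat.eq_of_dist_eq_zero hd)
    subst this
    exact ⟨SimpleGraph.Walk.nil, le_refl _⟩
  | succ k ih =>
    intro b b' hd
    have hne : (b : ℕ) ≠ (b' : ℕ) := by
      intro h; rw [h, Nat.dist_self] at hd; omega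
    obtain ⟨c, hadj, hc⟩ := path_step hne
    obtain ⟨W', hW'⟩ := ih c b' (by omega)
    refine ⟨SimpleGraph.Walk.cons (show (strongProd G (pathGraph n)).Adj (a, b) (a, c) from
      Or.inr (Or.inl ⟨rfl, hadj⟩)) W', by simp [SimpleGraph.Walk.length_cons]; omega⟩

/-- Lift a `G`-walk and any pair of path vertices to a product walk of length at most the max. -/
lemma lift_walk {α : Type*} {G : SimpleGraph α} {n : ℕ}
    {a a' : α} (W : G.Walk a a') : ∀ (b b' : Fin n),
    ∃ W' : (strongProd G (pathGraph n)).Walk (a, b) (a', b'),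
      W'.length ≤ max W.length (Nat.dist (b : ℕ) (b' : ℕ)) := by
  induction W with
  | nil =>
    intro b b'
    obtain ⟨W', hW'⟩ := lift_vert _ _ b b' rfl
    exact ⟨W', le_trans hW' (le_max_right _ _)⟩
  | @cons u v w h W ih =>
    intro b b'
    by_cases hbb : (b : ℕ) = (b' : ℕ)
    · have hbe : b = b' := Fin.ext hbb
      obtain ⟨W', hW'⟩ := ih b b'
      refine ⟨SimpleGraph.Walk.cons (show (strongProd G (pathGraph n)).Adj (u, b) (v, b) from
        Or.inl ⟨h, rfl⟩) W', ?_⟩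
      simp only [SimpleGraph.Walk.length_cons] at *
      have hz : Nat.dist (b : ℕ) (b' : ℕ) = 0 := by rw [hbb]; exact Nat.dist_self _
      omega
    · obtain ⟨c, hadj, hc⟩ := path_step hbb
      obtain ⟨W', hW'⟩ := ih c b'
      refine ⟨SimpleGraph.Walk.cons (show (strongProd G (pathGraph n)).Adj (u, b) (v, c) from
        Or.inr (Or.inr ⟨h, hadj⟩)) W', ?_⟩
      simp only [SimpleGraph.Walk.length_cons] at *
      omega

theorem gamma_strongProd_path_eq_top {V : Type*} [Fintype V] (G : SimpleGraph V)
    (hG : G.Connected) (d p n : ℕ) (hp : p < 2 * d) (hn : 2 ≤ n)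
    (hGtop : distPackDomNum G d p = ⊤) :
    distPackDomNum (strongProd G (pathGraph n)) d p = ⊤ := by
  classical
  -- From `hGtop`: no `d`-distance dominating `p`-packing of `G` exists.
  have hno : ∀ T : Finset V, ¬ (IsDistDomSet G d T ∧ IsPacking G p T) := by
    rintro T ⟨h1, h2⟩
    have hmem : (T.card : ℕ∞) ∈
        {m : ℕ∞ | ∃ S : Finset V, m = S.card ∧ IsDistDomSet G d S ∧ IsPacking G p S} :=
      ⟨T, rfl, h1, h2⟩
    have hle := sInf_le hmem
    unfold distPackDomNum at hGtop
    rw [hGtop, top_le_iff] at hle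
    exact (ENat.coe_ne_top T.card) hle
  -- Case `p ≤ d` is impossible: a maximum-cardinality `d`-packing is `d`-dominating.
  have hdp : d < p := by
    by_contra hh
    push_neg at hh
    obtain ⟨T, hTmem, hTmax⟩ := Finset.exists_max_image
      ((Finset.univ : Finset (Finset V)).filter
        (fun S => ∀ x ∈ S, ∀ y ∈ S, x ≠ y → d + 1 ≤ G.dist x y)) Finset.card
      ⟨∅, by simp⟩
    rw [Finset.mem_filter] at hTmem
    have hTpack : ∀ x ∈ T, ∀ y ∈ T, x ≠ y → d + 1 ≤ G.dist x y := hTmem.2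
    have hTdom : IsDistDomSet G d T := by
      intro v
      by_contra hv
      push_neg at hv
      have hvT : v ∉ T := fun hvT => by
        have := hv v hvT
        rw [SimpleGraph.dist_self] at this
        omega
      have hins : insert v T ∈ (Finset.univ : Finset (Finset V)).filter
          (fun S => ∀ x ∈ S, ∀ y ∈ S, x ≠ y → d + 1 ≤ G.dist x y) := by
        rw [Finset.mem_filter]
        refine ⟨Finset.mem_univ _, ?_⟩
        intro x hx y hy hxy
        rw [Finset.mem_insert] at hx hy
        rcases hx with rfl | hx
        · rcases hy with rfl | hy
          · exact absurd rfl hxy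
          · rw [SimpleGraph.dist_comm]
            have := hv y hy
            omega
        · rcases hy with rfl | hy
          · have := hv x hx
            omega
          · exact hTpack x hx y hy hxy
      have := hTmax _ hins
      rw [Finset.card_insert_of_notMem hvT] at this
      omega
    exact hno T ⟨hTdom, fun x hx y hy hxy => le_trans (by omega) (hTpack x hx y hy hxy)⟩
  -- Main argument.
  unfold distPackDomNum
  rw [sInf_eq_top]
  rintro a ⟨S, rfl, hdom, hpack⟩
  exfalso
  set H := strongProd G (pathGraph n) with hH
  have hz : (0 : ℕ) < n := by omega
  let z0 : Fin n := ⟨0, hz⟩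
  -- reachability in the product
  have hreach : ∀ x y : V × Fin n, H.Reachable x y := by
    rintro ⟨a1, b1⟩ ⟨a2, b2⟩
    obtain ⟨Wg⟩ := hG.preconnected a1 a2
    obtain ⟨W', _⟩ := lift_walk (G := G) (n := n) Wg b1 b2
    exact ⟨W'⟩
  -- distance in the product is at most the max of the coordinate distances
  have hdistle : ∀ (a1 a2 : V) (b1 b2 : Fin n),
      H.dist (a1, b1) (a2, b2) ≤ max (G.dist a1 a2) (Nat.dist (b1 : ℕ) (b2 : ℕ)) := by
    intro a1 a2 b1 b2
    obtain ⟨Wg, hWg⟩ := (hG.preconnected a1 a2).exists_walk_length_eq_dist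
    obtain ⟨W', hW'⟩ := lift_walk (G := G) (n := n) Wg b1 b2
    calc H.dist (a1, b1) (a2, b2) ≤ W'.length := SimpleGraph.dist_le W'
      _ ≤ max Wg.length (Nat.dist (b1 : ℕ) (b2 : ℕ)) := hW'
      _ = _ := by rw [hWg]
  -- the candidate set in G
  let T : Finset V := (S.filter (fun x => (x.2 : ℕ) ≤ p)).image Prod.fst
  have hTdom : IsDistDomSet G d T := by
    intro v
    obtain ⟨⟨a1, b1⟩, haS, had⟩ := hdom (v, z0)
    obtain ⟨Wp, hWp⟩ := (hreach (a1, b1) (v, z0)).exists_walk_length_eq_dist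
    obtain ⟨Wg, hWg⟩ := proj1_walk Wp
    have h2 := proj2_walk Wp
    have hb1 : (b1 : ℕ) ≤ d := by
      have h2' : Nat.dist (b1 : ℕ) 0 ≤ Wp.length := h2
      have hWd : Wp.length ≤ d := by rw [hWp]; exact had
      simp only [Nat.dist] at h2'
      omega
    refine ⟨a1, ?_, ?_⟩
    · exact Finset.mem_image.mpr ⟨(a1, b1), Finset.mem_filter.mpr ⟨haS, by exact hb1.trans hdp.le⟩, rfl⟩
    · calc G.dist a1 v ≤ Wg.length := SimpleGraph.dist_le Wg
        _ ≤ Wp.length := hWg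
        _ ≤ d := by rw [hWp]; exact had
  have hTpack : IsPacking G p T := by
    intro x hx y hy hxy
    obtain ⟨⟨xa, xb⟩, hxmem, hxeq⟩ := Finset.mem_image.mp hx
    obtain ⟨⟨ya, yb⟩, hymem, hyeq⟩ := Finset.mem_image.mp hy
    simp only at hxeq hyeq
    subst hxeq; subst hyeq
    rw [Finset.mem_filter] at hxmem hymem
    have hne : ((xa, xb) : V × Fin n) ≠ (ya, yb) := by
      intro h; exact hxy (congrArg Prod.fst h)
    have hple := hpack _ hxmem.1 _ hymem.1 hne
    have hub := hdistle xa ya xb yb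
    have hbd : Nat.dist (xb : ℕ) (yb : ℕ) ≤ p := by
      have h1 : (xb : ℕ) ≤ p := hxmem.2
      have h2 : (yb : ℕ) ≤ p := hymem.2
      simp only [Nat.dist]
      omega
    have := le_trans hple hub
    rcases le_max_iff.mp this with h | h
    · exact h
    · omega
  exact hno T ⟨hTdom, hTpack⟩
end

section
/- Let d and p be nonnegative integers, m ≥ 3 and n ≥ 3 integers, and let r = n mod (2d+1). If (2d+1−r) · ⌈m/(2d+1)⌉ < 2d+1 (equivalently, (1 − r/(2d+1)) · ⌈m/(2d+1)⌉ < 1), then γ_d^p(C_m ⊠ C_n) = γ_d^p(C_m) · γ_d^p(C_n) (in ℕ ∪ {∞}). -/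
open SimpleGraph

set_option linter.unusedSectionVars false
set_option maxHeartbeats 1000000

open Finset
open scoped Fin.NatCast Fin.IntCast Fin.CommRing

/-- cyclic distance on Fin n -/
def cdist {n : ℕ} (a b : Fin n) : ℕ := min (b - a).val (a - b).val

private def gapf (b c i : ℕ) : ℕ := i * b + min i c

lemma gapf_mono {b c : ℕ} {i j : ℕ} (h : i ≤ j) : gapf b c i + (j - i) * b ≤ gapf b c j := by
  unfold gapf
  have h1 : j * b = i * b + (j - i) * b := by
    rw [← Nat.add_mul, Nat.add_sub_cancel' h]
  omega

lemma gapf_gap {b c : ℕ} (i : ℕ) : gapf b c (i+1) ≤ gapf b c i + b + 1 := by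
  unfold gapf
  have h1 : (i+1) * b = i * b + b := by ring
  omega

lemma nat_partition (m q b c d : ℕ) (hq : 1 ≤ q) (hm : m = q * b + c) (hcq : c < q)
    (hgapb : b ≤ 2*d+1) (hgapc : c = 0 ∨ b + 1 ≤ 2*d+1) :
    ∀ x < m, ∃ i < q, (gapf b c i ≤ x ∧ x - gapf b c i ≤ d) ∨
      (x ≤ gapf b c i ∧ gapf b c i - x ≤ d) ∨ (i = 0 ∧ m - x ≤ d) := by
  intro x hx
  set P : ℕ → Prop := fun i => gapf b c i ≤ x with hP
  have hP0 : P 0 := by simp [hP, gapf]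
  classical
  set i := Nat.findGreatest P (q-1) with hi
  have hiq : i ≤ q - 1 := Nat.findGreatest_le _
  have hPi : P i := Nat.findGreatest_spec (Nat.zero_le _) hP0
  have hgap : ∀ j : ℕ, gapf b c (j+1) ≤ gapf b c j + (2*d+1) := by
    intro j
    have h1 := gapf_gap (b := b) (c := c) j
    rcases hgapc with h | h
    · subst h
      unfold gapf
      have : (j+1) * b = j * b + b := by ring
      omega
    · omega
  rcases le_or_gt (x - gapf b c i) d with hle | hlt
  · exact ⟨i, by omega, Or.inl ⟨hPi, hle⟩⟩
  rcases lt_or_eq_of_le hiq with hiq' | hiq'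
  · have hnP : ¬ P (i+1) :=
      Nat.findGreatest_is_greatest (show Nat.findGreatest P (q-1) < i + 1 by omega) (by omega)
    have h2 := hgap i
    refine ⟨i+1, by omega, Or.inr (Or.inl ⟨?_, ?_⟩)⟩
    · simp only [hP, not_le] at hnP; omega
    · simp only [hP, not_le] at hnP; omega
  · have hmq : m = gapf b c q := by
      unfold gapf; rw [min_eq_right (by omega)]; omega
    have h2 := hgap (q-1)
    have h3 : q - 1 + 1 = q := by omega
    rw [h3] at h2
    refine ⟨0, by omega, Or.inr (Or.inr ⟨rfl, ?_⟩)⟩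
    simp only [hP] at hPi
    rw [hiq'] at hPi hlt
    omega

section cyclebasic
open SimpleGraph
variable {n : ℕ} [NeZero n]

lemma cdist_comm (a b : Fin n) : cdist a b = cdist b a := min_comm _ _

lemma cdist_le_natAbs {a b : Fin n} {s : ℤ} (h : b - a = (s : Fin n)) :
    cdist a b ≤ s.natAbs := by
  rcases le_or_gt 0 s with hs | hs
  · have h1 : b - a = ((s.natAbs : ℕ) : Fin n) := by
      have hs' : s = (s.natAbs : ℤ) := by omega
      rw [h]; conv_lhs => rw [hs']
      rw [Int.cast_natCast]
    calc cdist a b ≤ (b - a).val := min_le_left _ _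
      _ = s.natAbs % n := by rw [h1, Fin.val_natCast]
      _ ≤ s.natAbs := Nat.mod_le _ _
  · have h1 : a - b = ((s.natAbs : ℕ) : Fin n) := by
      have h2 : a - b = ((-s : ℤ) : Fin n) := by rw [← neg_sub b a, h]; push_cast; ring
      have hs' : -s = (s.natAbs : ℤ) := by omega
      rw [h2]; conv_lhs => rw [hs']
      rw [Int.cast_natCast]
    calc cdist a b ≤ (a - b).val := min_le_right _ _
      _ = s.natAbs % n := by rw [h1, Fin.val_natCast]
      _ ≤ s.natAbs := Nat.mod_le _ _

lemma walk_diff {a b : Fin n} (w : (cycleGraph n).Walk a b) :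
    ∃ s : ℤ, s.natAbs ≤ w.length ∧ b - a = (s : Fin n) := by
  induction w with
  | nil => exact ⟨0, by simp⟩
  | @cons u v b h w ih =>
    obtain ⟨s, hs, hval⟩ := ih
    rw [cycleGraph_adj'] at h
    rcases h with h | h
    · refine ⟨s - 1, ?_, ?_⟩
      · simp only [Walk.length_cons]; omega
      · have huv : u - v = ((1:ℕ) : Fin n) := by
          rw [← Fin.cast_val_eq_self (u - v), h]
        have : v - u = ((-1 : ℤ) : Fin n) := by
          have := congrArg (fun x => -x) huv
          simpa using this
        calc b - u = (b - v) + (v - u) := by ring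
          _ = ((s : Fin n)) + ((-1 : ℤ) : Fin n) := by rw [hval, this]
          _ = ((s - 1 : ℤ) : Fin n) := by push_cast; ring
    · refine ⟨s + 1, ?_, ?_⟩
      · simp only [Walk.length_cons]; omega
      · have huv : v - u = ((1:ℕ) : Fin n) := by
          rw [← Fin.cast_val_eq_self (v - u), h]
        calc b - u = (b - v) + (v - u) := by ring
          _ = ((s : Fin n)) + (((1:ℕ) : Fin n)) := by rw [hval, huv]
          _ = ((s + 1 : ℤ) : Fin n) := by push_cast; ring

lemma exists_walk_add (hn : 3 ≤ n) (a : Fin n) (k : ℕ) :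
    ∃ w : (cycleGraph n).Walk a (a + (k : Fin n)), w.length = k := by
  induction k with
  | zero => exact ⟨Walk.nil.copy rfl (by simp), by simp⟩
  | succ k ih =>
    obtain ⟨w, hw⟩ := ih
    have hadj : (cycleGraph n).Adj (a + (k : Fin n)) (a + ((k+1 : ℕ) : Fin n)) := by
      rw [cycleGraph_adj']
      right
      have : a + ((k+1 : ℕ) : Fin n) - (a + (k : Fin n)) = ((1:ℕ) : Fin n) := by
        push_cast; ring
      rw [this, Fin.val_natCast, Nat.mod_eq_of_lt (by omega)]
    exact ⟨w.concat hadj, by simp [hw]⟩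

lemma cycle_dist_le (hn : 3 ≤ n) (a : Fin n) (k : ℕ) :
    (cycleGraph n).dist a (a + (k : Fin n)) ≤ k := by
  obtain ⟨w, hw⟩ := exists_walk_add hn a k
  exact le_trans (dist_le w) (le_of_eq hw)

lemma cycle_reachable (hn : 3 ≤ n) (a b : Fin n) : (cycleGraph n).Reachable a b := by
  obtain ⟨w, -⟩ := exists_walk_add hn a (b - a).val
  refine ⟨w.copy rfl ?_⟩
  rw [Fin.cast_val_eq_self, add_sub_cancel]

lemma cycle_dist_eq (hn : 3 ≤ n) (a b : Fin n) :
    (cycleGraph n).dist a b = cdist a b := by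
  apply le_antisymm
  · apply le_min
    · have := cycle_dist_le hn a (b - a).val
      rwa [Fin.cast_val_eq_self, add_sub_cancel] at this
    · rw [SimpleGraph.dist_comm]
      have := cycle_dist_le hn b (a - b).val
      rwa [Fin.cast_val_eq_self, add_sub_cancel] at this
  · obtain ⟨w, hw⟩ := (cycle_reachable hn a b).exists_walk_length_eq_dist
    obtain ⟨s, hs, hval⟩ := walk_diff w
    exact le_trans (cdist_le_natAbs hval) (by omega)

lemma card_val_le (p : ℕ) :
    ((univ : Finset (Fin n)).filter (fun x => x.val ≤ p)).card = min n (p+1) := by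
  have h : (univ : Finset (Fin n)).filter (fun x => x.val ≤ p) =
      (Finset.range (min n (p+1))).attachFin (by intro a ha; simp at ha; omega) := by
    ext a
    simp [Finset.mem_attachFin, Finset.mem_range]
  rw [h, Finset.card_attachFin, Finset.card_range]

lemma card_window (t : Fin n) (p : ℕ) :
    ((univ : Finset (Fin n)).filter (fun i => (t - i).val ≤ p)).card = min n (p+1) := by
  rw [← card_val_le (n := n) p]
  apply Finset.card_nbij' (fun i => t - i) (fun x => t - x)
  · intro i hi; simp only [coe_filter, Set.mem_setOf_eq, mem_univ, true_and] at hi ⊢; exact hi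
  · intro x hx; simp only [coe_filter, Set.mem_setOf_eq, mem_univ, true_and] at hx ⊢
    rwa [sub_sub_cancel]
  · intro i _; simp only [sub_sub_cancel]
  · intro x _; simp only [sub_sub_cancel]

lemma ball_card_le (u : Fin n) (d : ℕ) :
    ((univ : Finset (Fin n)).filter (fun v => cdist u v ≤ d)).card ≤ 2*d+1 := by
  have hsub : (univ : Finset (Fin n)).filter (fun v => cdist u v ≤ d) ⊆
      (Finset.Icc (-(d:ℤ)) d).image (fun s : ℤ => u + ((s : ℤ) : Fin n)) := by
    intro v hv
    simp only [mem_filter, mem_univ, true_and] at hv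
    rw [Finset.mem_image]
    rcases min_le_iff.mp hv with h | h
    · refine ⟨((v - u).val : ℤ), ?_, ?_⟩
      · simp only [Finset.mem_Icc]; omega
      · rw [Int.cast_natCast, Fin.cast_val_eq_self, add_sub_cancel]
    · refine ⟨-((u - v).val : ℤ), ?_, ?_⟩
      · simp only [Finset.mem_Icc]; omega
      · rw [Int.cast_neg, Int.cast_natCast, Fin.cast_val_eq_self]
        rw [← sub_eq_add_neg, sub_sub_cancel]
  calc _ ≤ (Finset.Icc (-(d:ℤ)) d).card := le_trans (Finset.card_le_card hsub) Finset.card_image_le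
    _ = 2*d+1 := by rw [Int.card_Icc]; omega

lemma packing_count {S : Finset (Fin n)} {p : ℕ}
    (hpack : ∀ x ∈ S, ∀ y ∈ S, x ≠ y → p + 1 ≤ cdist x y) (hpn : p + 1 ≤ n) :
    S.card * (p+1) ≤ n := by
  classical
  set A : Fin n → Finset (Fin n) := fun u => (Finset.range (p+1)).image (fun j : ℕ => u + (j : Fin n)) with hA
  have hcard : ∀ u, (A u).card = p + 1 := by
    intro u
    rw [hA, Finset.card_image_of_injOn, Finset.card_range]
    intro j hj j' hj' hjj'
    simp only [Finset.coe_range, Set.mem_Iio] at hj hj'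
    have : (j : Fin n) = (j' : Fin n) := by
      have := add_left_cancel hjj'; exact this
    have := congrArg Fin.val this
    rwa [Fin.val_natCast, Fin.val_natCast, Nat.mod_eq_of_lt (by omega),
      Nat.mod_eq_of_lt (by omega)] at this
  have hdisj : ∀ x ∈ S, ∀ y ∈ S, x ≠ y → Disjoint (A x) (A y) := by
    intro x hx y hy hxy
    rw [Finset.disjoint_left]
    intro w hwx hwy
    simp only [hA, Finset.mem_image, Finset.mem_range] at hwx hwy
    obtain ⟨j, hj, hjw⟩ := hwx
    obtain ⟨j', hj', hjw'⟩ := hwy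
    have hsub : y - x = (((j : ℤ) - j' : ℤ) : Fin n) := by
      have heq : x + (j : Fin n) = y + (j' : Fin n) := by rw [hjw, hjw']
      have h2 : y - x = (j : Fin n) - (j' : Fin n) := by linear_combination -heq
      rw [h2]; push_cast; ring
    have hle := cdist_le_natAbs hsub
    have hp := hpack x hx y hy hxy
    have hna : ((j:ℤ) - j').natAbs ≤ p := by omega
    omega
  have hbig : (S.biUnion A).card = S.card * (p+1) := by
    rw [Finset.card_biUnion hdisj]
    rw [Finset.sum_congr rfl (fun u _ => hcard u), Finset.sum_const, smul_eq_mul]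
  calc S.card * (p+1) = (S.biUnion A).card := hbig.symm
    _ ≤ (univ : Finset (Fin n)).card := Finset.card_le_card (Finset.subset_univ _)
    _ = n := by simp

lemma domination_count {S : Finset (Fin n)} {d : ℕ}
    (hdom : ∀ v : Fin n, ∃ u ∈ S, cdist u v ≤ d) :
    n ≤ S.card * (2*d+1) := by
  classical
  have hsub : (univ : Finset (Fin n)) ⊆ S.biUnion (fun u => univ.filter (fun v => cdist u v ≤ d)) := by
    intro v _
    rw [Finset.mem_biUnion]
    obtain ⟨u, hu, hud⟩ := hdom v
    exact ⟨u, hu, by simp [hud]⟩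
  calc n = (univ : Finset (Fin n)).card := by simp
    _ ≤ _ := Finset.card_le_card hsub
    _ ≤ ∑ u ∈ S, (univ.filter (fun v => cdist u v ≤ d)).card := Finset.card_biUnion_le
    _ ≤ ∑ u ∈ S, (2*d+1) := Finset.sum_le_sum (fun u _ => ball_card_le u d)
    _ = S.card * (2*d+1) := by rw [Finset.sum_const, smul_eq_mul]

end cyclebasic

section construct
variable {m : ℕ} [NeZero m]

lemma cdist_cast {x y : ℕ} (hy : y ≤ x) (hx : x < m) :
    cdist (y : Fin m) (x : Fin m) = min (x - y) (m - (x - y)) := by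
  rcases eq_or_lt_of_le hy with rfl | hlt
  · simp [cdist]
  · have h1 : (x : Fin m) - (y : Fin m) = ((x - y : ℕ) : Fin m) := (Nat.cast_sub hy).symm
    have h2 : (y : Fin m) - (x : Fin m) = ((m - (x - y) : ℕ) : Fin m) := by
      rw [Nat.cast_sub (by omega : x - y ≤ m), Fin.natCast_self, ← h1]
      ring
    unfold cdist
    rw [h1, h2, Fin.val_natCast, Fin.val_natCast,
      Nat.mod_eq_of_lt (by omega), Nat.mod_eq_of_lt (by omega)]

lemma exists_balanced (d p : ℕ) (hm : 3 ≤ m)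
    (hfeas : (m + 2*d)/(2*d+1) = 1 ∨ ((m + 2*d)/(2*d+1)) * (p+1) ≤ m) :
    ∃ S : Finset (Fin m), S.card = (m + 2*d)/(2*d+1) ∧
      (∀ v : Fin m, ∃ u ∈ S, cdist u v ≤ d) ∧
      (∀ x ∈ S, ∀ y ∈ S, x ≠ y → p + 1 ≤ cdist x y) := by
  classical
  set q := (m + 2*d)/(2*d+1) with hqdef
  have hq1 : 1 ≤ q := (Nat.one_le_div_iff (by omega)).mpr (by omega)
  have hdm : (2*d+1) * q + (m + 2*d) % (2*d+1) = m + 2*d := by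
    rw [hqdef]; exact Nat.div_add_mod _ _
  have hmod := Nat.mod_lt (m + 2*d) (show 0 < 2*d+1 by omega)
  have hco : (2*d+1) * q = q * (2*d+1) := Nat.mul_comm _ _
  have hmq : m ≤ q * (2*d+1) := by omega
  have hqm : (q - 1) * (2*d+1) < m := by
    have h2 : q * (2*d+1) = (q-1) * (2*d+1) + (2*d+1) := by
      have h3 : q - 1 + 1 = q := by omega
      calc q * (2*d+1) = (q - 1 + 1) * (2*d+1) := by rw [h3]
        _ = (q-1) * (2*d+1) + (2*d+1) := by ring
    omega
  have hqlem : q ≤ m := by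
    have := Nat.le_mul_of_pos_right (q-1) (show 0 < 2*d+1 by omega)
    omega
  set b := m / q with hbdef
  set c := m % q with hcdef
  have hmbc : q * b + c = m := Nat.div_add_mod m q
  have hcq : c < q := Nat.mod_lt _ (by omega)
  have hb1 : 1 ≤ b := by
    rcases Nat.eq_zero_or_pos b with hb0 | h
    · exfalso; rw [hb0, Nat.mul_zero] at hmbc; omega
    · exact h
  have hbD : b ≤ 2*d+1 := by
    by_contra hb
    push_neg at hb
    have : q * (2*d+1) < q * b := mul_lt_mul_of_pos_left hb (show 0 < q by omega)
    omega
  have hgapc : c = 0 ∨ b + 1 ≤ 2*d+1 := by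
    rcases Nat.eq_zero_or_pos c with h | h
    · exact Or.inl h
    · right
      by_contra hb
      push_neg at hb
      have hbb : b = 2*d+1 := by omega
      rw [hbb] at hmbc
      omega
  have hfq : gapf b c q = m := by
    unfold gapf; rw [min_eq_right (by omega)]; omega
  have hflt : ∀ i, i < q → gapf b c i + b ≤ m := by
    intro i hi
    have h1 := gapf_mono (b := b) (c := c) (le_of_lt hi)
    have h2 : b ≤ (q - i) * b := Nat.le_mul_of_pos_left b (by omega)
    omega
  have hfmono : ∀ i j, i < j → gapf b c i + b ≤ gapf b c j := by
    intro i j hij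
    have h1 := gapf_mono (b := b) (c := c) (le_of_lt hij)
    have h2 : b ≤ (j - i) * b := Nat.le_mul_of_pos_left b (by omega)
    omega
  refine ⟨(Finset.range q).image (fun i : ℕ => ((gapf b c i : ℕ) : Fin m)), ?_, ?_, ?_⟩
  · rw [Finset.card_image_of_injOn, Finset.card_range]
    intro i hi j hj hij
    simp only [Finset.coe_range, Set.mem_Iio] at hi hj
    have hvi := congrArg Fin.val hij
    rw [Fin.val_natCast, Fin.val_natCast, Nat.mod_eq_of_lt (by have := hflt i hi; omega),
      Nat.mod_eq_of_lt (by have := hflt j hj; omega)] at hvi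
    rcases lt_trichotomy i j with h | h | h
    · have := hfmono i j h; omega
    · exact h
    · have := hfmono j i h; omega
  · intro v
    obtain ⟨i, hi, hcase⟩ := nat_partition m q b c d hq1 (by omega) hcq hbD hgapc v.val v.isLt
    rcases hcase with ⟨h1, h2⟩ | ⟨h1, h2⟩ | ⟨h1, h2⟩
    · refine ⟨((gapf b c i : ℕ) : Fin m), Finset.mem_image.mpr ⟨i, Finset.mem_range.mpr hi, rfl⟩, ?_⟩
      have heq : v - ((gapf b c i : ℕ) : Fin m) =
          (((v.val : ℤ) - (gapf b c i : ℤ) : ℤ) : Fin m) := by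
        push_cast [Fin.cast_val_eq_self]
        ring
      have := cdist_le_natAbs heq
      omega
    · refine ⟨((gapf b c i : ℕ) : Fin m), Finset.mem_image.mpr ⟨i, Finset.mem_range.mpr hi, rfl⟩, ?_⟩
      have heq : v - ((gapf b c i : ℕ) : Fin m) =
          (((v.val : ℤ) - (gapf b c i : ℤ) : ℤ) : Fin m) := by
        push_cast [Fin.cast_val_eq_self]
        ring
      have := cdist_le_natAbs heq
      omega
    · subst h1
      refine ⟨((gapf b c 0 : ℕ) : Fin m), Finset.mem_image.mpr ⟨0, Finset.mem_range.mpr (by omega), rfl⟩, ?_⟩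
      have hg0 : gapf b c 0 = 0 := by unfold gapf; simp
      have heq : v - ((gapf b c 0 : ℕ) : Fin m) =
          (((v.val : ℤ) - (m : ℤ) : ℤ) : Fin m) := by
        rw [hg0]
        have hm0 : ((m : ℤ) : Fin m) = 0 := by
          push_cast [Fin.natCast_self]
          rfl
        push_cast [Fin.cast_val_eq_self, hm0]
        ring
      have := cdist_le_natAbs heq
      have hna : ((v.val : ℤ) - m).natAbs = m - v.val := by
        have := v.isLt; omega
      omega
  · intro x hx y hy hxy
    simp only [Finset.mem_image, Finset.mem_range] at hx hy
    obtain ⟨i, hi, rfl⟩ := hx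
    obtain ⟨j, hj, rfl⟩ := hy
    have hij : i ≠ j := fun h => hxy (by rw [h])
    have hq2 : 2 ≤ q := by omega
    have hpb : p + 1 ≤ b := by
      rcases hfeas with h | h
      · omega
      · by_contra hpb
        push_neg at hpb
        have h1 : q * (b+1) ≤ q * (p+1) := Nat.mul_le_mul_left q (by omega)
        have h2 : q * (b+1) = q * b + q := by ring
        omega
    have key : ∀ i j, i < j → j < q →
        p + 1 ≤ cdist ((gapf b c i : ℕ) : Fin m) ((gapf b c j : ℕ) : Fin m) := by
      intro i j hij hjq
      have h1 := hfmono i j hij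
      have h2 := hflt j hjq
      have h4 : gapf b c 0 = 0 := by unfold gapf; simp
      have h5 : 0 ≤ gapf b c i := Nat.zero_le _
      rw [cdist_cast (by omega) (by omega)]
      omega
    rcases lt_trichotomy i j with h | h | h
    · exact key i j h hj
    · omega
    · rw [cdist_comm]; exact key j i h hi

end construct
section prod
variable {α β : Type*} {G : SimpleGraph α} {H : SimpleGraph β}

lemma strongProd_walk_fst (hG : G.Connected) {x y : α × β}
    (w : (strongProd G H).Walk x y) : G.dist x.1 y.1 ≤ w.length := by
  induction w with
  | nil => simp
  | @cons u v z h w ih =>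
    have step : G.dist u.1 v.1 ≤ 1 := by
      rcases h with ⟨h1, _⟩ | ⟨h1, _⟩ | ⟨h1, _⟩
      · exact le_trans (dist_le (Walk.cons h1 Walk.nil)) (by simp)
      · rw [h1]; simp [SimpleGraph.dist_self]
      · exact le_trans (dist_le (Walk.cons h1 Walk.nil)) (by simp)
    calc G.dist u.1 z.1 ≤ G.dist u.1 v.1 + G.dist v.1 z.1 := hG.dist_triangle
      _ ≤ 1 + w.length := Nat.add_le_add step ih
      _ = (Walk.cons h w).length := by simp [Walk.length_cons]; omega

lemma strongProd_walk_snd (hH : H.Connected) {x y : α × β}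
    (w : (strongProd G H).Walk x y) : H.dist x.2 y.2 ≤ w.length := by
  induction w with
  | nil => simp
  | @cons u v z h w ih =>
    have step : H.dist u.2 v.2 ≤ 1 := by
      rcases h with ⟨_, h1⟩ | ⟨_, h1⟩ | ⟨_, h1⟩
      · rw [h1]; simp [SimpleGraph.dist_self]
      · exact le_trans (dist_le (Walk.cons h1 Walk.nil)) (by simp)
      · exact le_trans (dist_le (Walk.cons h1 Walk.nil)) (by simp)
    calc H.dist u.2 z.2 ≤ H.dist u.2 v.2 + H.dist v.2 z.2 := hH.dist_triangle
      _ ≤ 1 + w.length := Nat.add_le_add step ih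
      _ = (Walk.cons h w).length := by simp [Walk.length_cons]; omega

lemma exists_walk_right {g : α} {h h' : β} (w2 : H.Walk h h') :
    ∃ w : (strongProd G H).Walk (g, h) (g, h'), w.length = w2.length := by
  induction w2 with
  | nil => exact ⟨Walk.nil, rfl⟩
  | @cons b1 b2 b3 hadj w2' ih =>
    obtain ⟨w, hw⟩ := ih
    exact ⟨Walk.cons (show (strongProd G H).Adj (g, b1) (g, b2) from
      Or.inr (Or.inl ⟨rfl, hadj⟩)) w, by simp [hw]⟩

lemma exists_prod_walk {g g' : α} (w1 : G.Walk g g') :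
    ∀ {h h' : β} (w2 : H.Walk h h'),
    ∃ w : (strongProd G H).Walk (g, h) (g', h'), w.length = max w1.length w2.length := by
  induction w1 with
  | nil =>
    intro h h' w2
    obtain ⟨w, hw⟩ := exists_walk_right (G := G) w2
    exact ⟨w, by simp [hw]⟩
  | @cons a1 a2 a3 hadj w1' ih1 =>
    intro h h' w2
    cases w2 with
    | nil =>
      obtain ⟨w, hw⟩ := ih1 (Walk.nil : H.Walk h h)
      refine ⟨Walk.cons (show (strongProd G H).Adj (a1, h) (a2, h) from
        Or.inl ⟨hadj, rfl⟩) w, ?_⟩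
      simp at hw ⊢
      omega
    | cons hadj2 w2' =>
      rename_i b2
      obtain ⟨w, hw⟩ := ih1 w2'
      refine ⟨Walk.cons (show (strongProd G H).Adj (a1, h) (a2, b2) from
        Or.inr (Or.inr ⟨hadj, hadj2⟩)) w, ?_⟩
      simp [hw]

lemma strongProd_dist (hG : G.Connected) (hH : H.Connected) (x y : α × β) :
    (strongProd G H).dist x y = max (G.dist x.1 y.1) (H.dist x.2 y.2) := by
  obtain ⟨w1, hw1⟩ := hG.exists_walk_length_eq_dist x.1 y.1
  obtain ⟨w2, hw2⟩ := hH.exists_walk_length_eq_dist x.2 y.2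
  obtain ⟨w, hw⟩ := exists_prod_walk w1 w2
  have hx : ((x.1, x.2) : α × β) = x := rfl
  have hy : ((y.1, y.2) : α × β) = y := rfl
  have hreach : (strongProd G H).Reachable x y := ⟨w.copy hx hy⟩
  apply le_antisymm
  · have := dist_le (w.copy hx hy)
    rw [Walk.length_copy] at this
    omega
  · obtain ⟨w', hw'⟩ := hreach.exists_walk_length_eq_dist
    have h1 := strongProd_walk_fst hG w'
    have h2 := strongProd_walk_snd hH w'
    omega

end prod

lemma ceil_facts (m d : ℕ) (hm : 1 ≤ m) :
    1 ≤ (m + 2*d)/(2*d+1) ∧ m ≤ ((m + 2*d)/(2*d+1)) * (2*d+1) ∧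
      ((m + 2*d)/(2*d+1) - 1) * (2*d+1) < m := by
  set q := (m + 2*d)/(2*d+1) with hqdef
  have hq1 : 1 ≤ q := (Nat.one_le_div_iff (by omega)).mpr (by omega)
  have hdm : (2*d+1) * q + (m + 2*d) % (2*d+1) = m + 2*d := by
    rw [hqdef]; exact Nat.div_add_mod _ _
  have hmod := Nat.mod_lt (m + 2*d) (show 0 < 2*d+1 by omega)
  have hco : (2*d+1) * q = q * (2*d+1) := Nat.mul_comm _ _
  have hmq : m ≤ q * (2*d+1) := by omega
  have h2 : q * (2*d+1) = (q-1) * (2*d+1) + (2*d+1) := by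
    have h3 : q - 1 + 1 = q := by omega
    calc q * (2*d+1) = (q - 1 + 1) * (2*d+1) := by rw [h3]
      _ = (q-1) * (2*d+1) + (2*d+1) := by ring
  exact ⟨hq1, hmq, by omega⟩

section gammaAPI
variable {V : Type*} (G : SimpleGraph V) (d p : ℕ)

lemma distPackDomNum_le {S : Finset V} (h1 : IsDistDomSet G d S) (h2 : IsPacking G p S) :
    distPackDomNum G d p ≤ (S.card : ℕ∞) :=
  sInf_le ⟨S, rfl, h1, h2⟩

lemma le_distPackDomNum {c : ℕ}
    (h : ∀ S : Finset V, IsDistDomSet G d S → IsPacking G p S → c ≤ S.card) :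
    (c : ℕ∞) ≤ distPackDomNum G d p := by
  apply le_sInf
  rintro x ⟨S, rfl, h1, h2⟩
  exact_mod_cast h S h1 h2

lemma distPackDomNum_eq_top
    (h : ∀ S : Finset V, IsDistDomSet G d S → IsPacking G p S → False) :
    distPackDomNum G d p = ⊤ := by
  rw [distPackDomNum]
  suffices hs : {n : ℕ∞ | ∃ S : Finset V, n = S.card ∧ IsDistDomSet G d S ∧ IsPacking G p S} = ∅ by
    rw [hs]; exact sInf_empty
  ext x
  simp only [Set.mem_empty_iff_false, iff_false, Set.mem_setOf_eq]
  rintro ⟨S, _, h1, h2⟩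
  exact h S h1 h2

lemma one_le_distPackDomNum [Nonempty V] : 1 ≤ distPackDomNum G d p := by
  apply le_sInf
  rintro x ⟨S, rfl, h1, h2⟩
  obtain ⟨u, hu, -⟩ := h1 (Classical.arbitrary V)
  have h3 : 0 < S.card := card_pos.mpr ⟨u, hu⟩
  exact_mod_cast h3

lemma distPackDomNum_ne_zero [Nonempty V] : distPackDomNum G d p ≠ 0 := by
  have := one_le_distPackDomNum G d p
  intro h
  rw [h] at this
  exact absurd this (by simp)

end gammaAPI

section cyclegamma
open SimpleGraph
variable {m : ℕ} [NeZero m]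

lemma isDistDom_cycle_iff (hm : 3 ≤ m) {d : ℕ} {S : Finset (Fin m)} :
    IsDistDomSet (cycleGraph m) d S ↔ ∀ v : Fin m, ∃ u ∈ S, cdist u v ≤ d := by
  unfold IsDistDomSet
  constructor <;> intro h v <;> obtain ⟨u, hu, hud⟩ := h v <;> refine ⟨u, hu, ?_⟩
  · rwa [cycle_dist_eq hm] at hud
  · rwa [cycle_dist_eq hm]

lemma isPacking_cycle_iff (hm : 3 ≤ m) {p : ℕ} {S : Finset (Fin m)} :
    IsPacking (cycleGraph m) p S ↔ ∀ x ∈ S, ∀ y ∈ S, x ≠ y → p + 1 ≤ cdist x y := by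
  unfold IsPacking
  constructor <;> intro h x hx y hy hxy <;> have := h x hx y hy hxy
  · rwa [cycle_dist_eq hm] at this
  · rwa [cycle_dist_eq hm]

lemma cycle_dom_lower (hm : 3 ≤ m) {d : ℕ} {S : Finset (Fin m)}
    (hdom : ∀ v : Fin m, ∃ u ∈ S, cdist u v ≤ d) :
    (m + 2*d)/(2*d+1) ≤ S.card := by
  obtain ⟨hq1, hmq, hqm⟩ := ceil_facts m d (by omega)
  have h1 := domination_count hdom
  by_contra hq
  push_neg at hq
  have h2 : S.card ≤ (m + 2*d)/(2*d+1) - 1 := by omega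
  have h3 : S.card * (2*d+1) ≤ ((m + 2*d)/(2*d+1) - 1) * (2*d+1) :=
    Nat.mul_le_mul_right _ h2
  omega

lemma cdist_lt_card (x y : Fin m) (hxy : x ≠ y) : cdist x y < m := by
  have h1 : (y - x).val < m := (y - x).isLt
  have := min_le_left ((y - x).val) ((x - y).val)
  unfold cdist
  omega

lemma cycle_gamma_finite (hm : 3 ≤ m) {d p : ℕ}
    (hfeas : (m + 2*d)/(2*d+1) = 1 ∨ ((m + 2*d)/(2*d+1)) * (p+1) ≤ m) :
    distPackDomNum (cycleGraph m) d p = (((m + 2*d)/(2*d+1) : ℕ) : ℕ∞) := by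
  apply le_antisymm
  · obtain ⟨S, hcard, hdom, hpack⟩ := exists_balanced d p hm hfeas
    have := distPackDomNum_le (cycleGraph m) d p
      ((isDistDom_cycle_iff hm).mpr hdom) ((isPacking_cycle_iff hm).mpr hpack)
    rwa [hcard] at this
  · apply le_distPackDomNum
    intro S h1 h2
    exact cycle_dom_lower hm ((isDistDom_cycle_iff hm).mp h1)

lemma cycle_gamma_top (hm : 3 ≤ m) {d p : ℕ}
    (hq2 : 2 ≤ (m + 2*d)/(2*d+1)) (hinf : m + 1 ≤ ((m + 2*d)/(2*d+1)) * (p+1)) :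
    distPackDomNum (cycleGraph m) d p = ⊤ := by
  apply distPackDomNum_eq_top
  intro S h1 h2
  have hdom := (isDistDom_cycle_iff hm).mp h1
  have hpack := (isPacking_cycle_iff hm).mp h2
  have hS : (m + 2*d)/(2*d+1) ≤ S.card := cycle_dom_lower hm hdom
  rcases le_or_gt (p+1) m with hpm | hpm
  · have h3 := packing_count hpack hpm
    have h4 : ((m + 2*d)/(2*d+1)) * (p+1) ≤ S.card * (p+1) := Nat.mul_le_mul_right _ hS
    omega
  · obtain ⟨x, hx, y, hy, hxy⟩ := Finset.one_lt_card.mp (by omega : 1 < S.card)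
    have h3 := hpack x hx y hy hxy
    have h4 := cdist_lt_card x y hxy
    omega

end cyclegamma

section torus
open SimpleGraph
variable {m n : ℕ} [NeZero m] [NeZero n]

lemma cycle_connected (hm : 3 ≤ m) : (cycleGraph m).Connected := by
  have : Nonempty (Fin m) := ⟨⟨0, by omega⟩⟩
  exact ⟨fun a b => cycle_reachable hm a b⟩

lemma torus_dist_eq (hm : 3 ≤ m) (hn : 3 ≤ n) (x y : Fin m × Fin n) :
    (strongProd (cycleGraph m) (cycleGraph n)).dist x y =
      max (cdist x.1 y.1) (cdist x.2 y.2) := by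
  rw [strongProd_dist (cycle_connected hm) (cycle_connected hn),
    cycle_dist_eq hm, cycle_dist_eq hn]

lemma isDistDom_torus_iff (hm : 3 ≤ m) (hn : 3 ≤ n) {d : ℕ} {T : Finset (Fin m × Fin n)} :
    IsDistDomSet (strongProd (cycleGraph m) (cycleGraph n)) d T ↔
      ∀ x : Fin m × Fin n, ∃ t ∈ T, max (cdist t.1 x.1) (cdist t.2 x.2) ≤ d := by
  unfold IsDistDomSet
  constructor <;> intro h v <;> obtain ⟨u, hu, hud⟩ := h v <;> refine ⟨u, hu, ?_⟩
  · rwa [torus_dist_eq hm hn] at hud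
  · rwa [torus_dist_eq hm hn]

lemma isPacking_torus_iff (hm : 3 ≤ m) (hn : 3 ≤ n) {p : ℕ} {T : Finset (Fin m × Fin n)} :
    IsPacking (strongProd (cycleGraph m) (cycleGraph n)) p T ↔
      ∀ x ∈ T, ∀ y ∈ T, x ≠ y → p + 1 ≤ max (cdist x.1 y.1) (cdist x.2 y.2) := by
  unfold IsPacking
  constructor <;> intro h x hx y hy hxy <;> have := h x hx y hy hxy
  · rwa [torus_dist_eq hm hn] at this
  · rwa [torus_dist_eq hm hn]

/-- The per-column lower bound and double counting. -/
lemma torus_column_count (hm : 3 ≤ m) {d : ℕ} {T : Finset (Fin m × Fin n)}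
    (hdom : ∀ x : Fin m × Fin n, ∃ t ∈ T, max (cdist t.1 x.1) (cdist t.2 x.2) ≤ d) :
    n * ((m + 2*d)/(2*d+1)) ≤ T.card * (2*d+1) := by
  classical
  have hcol : ∀ j : Fin n, (m + 2*d)/(2*d+1) ≤ (T.filter (fun t => cdist t.2 j ≤ d)).card := by
    intro j
    have hdomm : ∀ a : Fin m, ∃ u ∈ (T.filter (fun t => cdist t.2 j ≤ d)).image Prod.fst,
        cdist u a ≤ d := by
      intro a
      obtain ⟨t, ht, htd⟩ := hdom (a, j)
      refine ⟨t.1, Finset.mem_image.mpr ⟨t, Finset.mem_filter.mpr ⟨ht, ?_⟩, rfl⟩, ?_⟩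
      · simp only [sup_le_iff] at htd; exact htd.2
      · simp only [sup_le_iff] at htd; exact htd.1
    calc (m + 2*d)/(2*d+1) ≤ ((T.filter (fun t => cdist t.2 j ≤ d)).image Prod.fst).card :=
          cycle_dom_lower hm hdomm
      _ ≤ _ := Finset.card_image_le
  have hsum : ∑ j : Fin n, (T.filter (fun t => cdist t.2 j ≤ d)).card ≤ T.card * (2*d+1) := by
    have h1 : ∀ j : Fin n, (T.filter (fun t => cdist t.2 j ≤ d)).card
        = ∑ t ∈ T, if cdist t.2 j ≤ d then 1 else 0 := fun j => Finset.card_filter _ _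
    calc ∑ j : Fin n, (T.filter (fun t => cdist t.2 j ≤ d)).card
        = ∑ j : Fin n, ∑ t ∈ T, if cdist t.2 j ≤ d then 1 else 0 :=
          Finset.sum_congr rfl (fun j _ => h1 j)
      _ = ∑ t ∈ T, ∑ j : Fin n, if cdist t.2 j ≤ d then 1 else 0 := Finset.sum_comm
      _ = ∑ t ∈ T, ((univ : Finset (Fin n)).filter (fun j => cdist t.2 j ≤ d)).card := by
          refine Finset.sum_congr rfl (fun t _ => ?_)
          rw [Finset.card_filter]
      _ ≤ ∑ t ∈ T, (2*d+1) := Finset.sum_le_sum (fun t _ => ball_card_le t.2 d)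
      _ = T.card * (2*d+1) := by rw [Finset.sum_const, smul_eq_mul]
  calc n * ((m + 2*d)/(2*d+1)) = ∑ _j : Fin n, ((m + 2*d)/(2*d+1)) := by
        rw [Finset.sum_const, Finset.card_univ, Fintype.card_fin, smul_eq_mul]
    _ ≤ ∑ j : Fin n, (T.filter (fun t => cdist t.2 j ≤ d)).card :=
        Finset.sum_le_sum (fun j _ => hcol j)
    _ ≤ T.card * (2*d+1) := hsum

lemma torus_arith (n d q k t : ℕ) (hn : 3 ≤ n) (hq1 : 1 ≤ q)
    (hres : (2*d+1 - n % (2*d+1)) * q < 2*d+1)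
    (hk : k = (n + 2*d)/(2*d+1)) (hcount : n * q ≤ t * (2*d+1)) : q * k ≤ t := by
  set r := n % (2*d+1) with hr
  set e := n / (2*d+1) with he
  have hdm : (2*d+1) * e + r = n := Nat.div_add_mod n (2*d+1)
  have hrD : r < 2*d+1 := Nat.mod_lt _ (by omega)
  have hr1 : 1 ≤ r := by
    by_contra h0
    push_neg at h0
    have hr0 : r = 0 := by omega
    rw [hr0] at hres
    have h1 : (2*d+1) * 1 ≤ (2*d+1) * q := Nat.mul_le_mul_left _ hq1
    simp only [Nat.sub_zero] at hres
    have hco : (2*d+1) * q = q * (2*d+1) := Nat.mul_comm _ _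
    omega
  have hke : k = e + 1 := by
    rw [hk]
    apply Nat.div_eq_of_lt_le
    · have h1 : (e+1) * (2*d+1) = (2*d+1)*e + (2*d+1) := by ring
      omega
    · have h1 : (e+1+1) * (2*d+1) = (2*d+1)*e + 2*(2*d+1) := by ring
      omega
  subst hke
  have h1 : q * (e + 1) * (2*d+1) = q * ((2*d+1) * e) + q * (2*d+1) := by ring
  have h2 : n * q = q * ((2*d+1) * e) + r * q := by
    calc n * q = ((2*d+1) * e + r) * q := by rw [hdm]
      _ = q * ((2*d+1) * e) + r * q := by ring
  have h3 : q * (2*d+1) = q * r + q * ((2*d+1) - r) := by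
    rw [← Nat.mul_add, Nat.add_sub_cancel' (le_of_lt hrD)]
  have h4 : q * ((2*d+1) - r) = ((2*d+1) - r) * q := Nat.mul_comm _ _
  have h5 : q * r = r * q := Nat.mul_comm _ _
  have key : q * (e + 1) * (2*d+1) ≤ t * (2*d+1) + (2*d+1 - 1) := by omega
  have h6 : q * (e+1) * (2*d+1) = (2*d+1) * (q * (e+1)) := by ring
  have h7 : (2*d+1) * (t + 1) = (2*d+1) * t + (2*d+1) := by ring
  have h7' : t * (2*d+1) = (2*d+1) * t := Nat.mul_comm _ _
  have h8 : q * (e+1) < t + 1 := by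
    apply Nat.lt_of_mul_lt_mul_left (a := 2*d+1)
    omega
  omega

/-- If the second factor is infeasible, the torus has no dominating packing. -/
lemma torus_no_witness (hm : 3 ≤ m) (hn : 3 ≤ n) {d p : ℕ}
    (hk2 : 2 ≤ (n + 2*d)/(2*d+1)) (hinf : n + 1 ≤ ((n + 2*d)/(2*d+1)) * (p+1))
    {T : Finset (Fin m × Fin n)}
    (hdom : ∀ x : Fin m × Fin n, ∃ t ∈ T, max (cdist t.1 x.1) (cdist t.2 x.2) ≤ d)
    (hpack : ∀ x ∈ T, ∀ y ∈ T, x ≠ y → p + 1 ≤ max (cdist x.1 y.1) (cdist x.2 y.2)) :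
    False := by
  classical
  set k := (n + 2*d)/(2*d+1) with hkdef
  set D := 2*d+1 with hD
  -- Row lower bounds
  have hrow : ∀ i : Fin m, k ≤ (T.filter (fun t => cdist t.1 i ≤ d)).card := by
    intro i
    have hdomn : ∀ b : Fin n, ∃ u ∈ (T.filter (fun t => cdist t.1 i ≤ d)).image Prod.snd,
        cdist u b ≤ d := by
      intro b
      obtain ⟨t, ht, htd⟩ := hdom (i, b)
      refine ⟨t.2, Finset.mem_image.mpr ⟨t, Finset.mem_filter.mpr ⟨ht, ?_⟩, rfl⟩, ?_⟩
      · simp only [sup_le_iff] at htd; exact htd.1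
      · simp only [sup_le_iff] at htd; exact htd.2
    calc k ≤ ((T.filter (fun t => cdist t.1 i ≤ d)).image Prod.snd).card :=
          cycle_dom_lower hn hdomn
      _ ≤ _ := Finset.card_image_le
  -- Total count from rows
  have hsum1 : ∀ t : Fin m × Fin n,
      ((univ : Finset (Fin m)).filter (fun i => cdist t.1 i ≤ d)).card ≤ min m D := by
    intro t
    refine le_min ?_ (ball_card_le t.1 d)
    calc _ ≤ (univ : Finset (Fin m)).card := Finset.card_le_card (Finset.filter_subset _ _)
      _ = m := by simp
  have htotal : m * k ≤ T.card * min m D := by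
    have hsum : ∑ i : Fin m, (T.filter (fun t => cdist t.1 i ≤ d)).card ≤ T.card * min m D := by
      calc ∑ i : Fin m, (T.filter (fun t => cdist t.1 i ≤ d)).card
          = ∑ i : Fin m, ∑ t ∈ T, if cdist t.1 i ≤ d then 1 else 0 :=
            Finset.sum_congr rfl (fun i _ => Finset.card_filter _ _)
        _ = ∑ t ∈ T, ∑ i : Fin m, if cdist t.1 i ≤ d then 1 else 0 := Finset.sum_comm
        _ = ∑ t ∈ T, ((univ : Finset (Fin m)).filter (fun i => cdist t.1 i ≤ d)).card := by
            refine Finset.sum_congr rfl (fun t _ => ?_)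
            rw [Finset.card_filter]
        _ ≤ ∑ t ∈ T, min m D := Finset.sum_le_sum (fun t _ => hsum1 t)
        _ = T.card * min m D := by rw [Finset.sum_const, smul_eq_mul]
    calc m * k = ∑ _i : Fin m, k := by
          rw [Finset.sum_const, Finset.card_univ, Fintype.card_fin, smul_eq_mul]
      _ ≤ ∑ i : Fin m, (T.filter (fun t => cdist t.1 i ≤ d)).card :=
          Finset.sum_le_sum (fun i _ => hrow i)
      _ ≤ T.card * min m D := hsum
  obtain ⟨hk1', hnk, hkn⟩ := ceil_facts n d (by omega)
  have hnk' : n ≤ k * D := by rw [hkdef, hD]; exact hnk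
  have hkn' : (k - 1) * D < n := by rw [hkdef, hD]; exact hkn
  have hk2' : 2 ≤ k := hk2
  have hinf' : n + 1 ≤ k * (p+1) := hinf
  rcases le_or_gt (p+1) m with hpm | hpm
  · -- window counting
    have hwin : ∀ i : Fin m, (T.filter (fun t => (t.1 - i).val ≤ p)).card ≤ k - 1 := by
      intro i
      set W := T.filter (fun t => (t.1 - i).val ≤ p) with hW
      have hfstle : ∀ t ∈ W, ∀ t' ∈ W, t ≠ t' → p + 1 ≤ cdist t.2 t'.2 := by
        intro t ht t' ht' htt'
        have h1 : (t.1 - i).val ≤ p := (Finset.mem_filter.mp ht).2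
        have h2 : (t'.1 - i).val ≤ p := (Finset.mem_filter.mp ht').2
        have hsub : t'.1 - t.1 = ((((t'.1 - i).val : ℤ) - ((t.1 - i).val : ℤ) : ℤ) : Fin m) := by
          push_cast [Fin.cast_val_eq_self]
          ring
        have hcd : cdist t.1 t'.1 ≤ p := by
          have := cdist_le_natAbs hsub
          have hna : (((t'.1 - i).val : ℤ) - ((t.1 - i).val : ℤ)).natAbs ≤ p := by omega
          omega
        have := hpack t (Finset.mem_filter.mp ht).1 t' (Finset.mem_filter.mp ht').1 htt'
        omega
      have hsndinj : Set.InjOn Prod.snd (W : Set (Fin m × Fin n)) := by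
        intro t ht t' ht' heq
        by_contra htne
        have := hfstle t (by simpa using ht) t' (by simpa using ht') htne
        rw [heq] at this
        have : cdist t'.2 t'.2 = 0 := by simp [cdist]
        omega
      have hcardW : W.card = (W.image Prod.snd).card := (Finset.card_image_of_injOn hsndinj).symm
      set P := W.image Prod.snd with hP
      have hPpack : ∀ x ∈ P, ∀ y ∈ P, x ≠ y → p + 1 ≤ cdist x y := by
        intro x hx y hy hxy
        obtain ⟨t, ht, rfl⟩ := Finset.mem_image.mp hx
        obtain ⟨t', ht', rfl⟩ := Finset.mem_image.mp hy
        exact hfstle t ht t' ht' (fun h => hxy (by rw [h]))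
      rcases le_or_gt P.card 1 with hP1 | hP1
      · omega
      · obtain ⟨x, hx, y, hy, hxy⟩ := Finset.one_lt_card.mp hP1
        have hpn : p + 1 ≤ n := by
          have h3 := hPpack x hx y hy hxy
          have h4 := cdist_lt_card x y hxy
          omega
        have h5 := packing_count hPpack hpn
        by_contra hc
        push_neg at hc
        have h6 : k ≤ P.card := by omega
        have h7 : k * (p+1) ≤ P.card * (p+1) := Nat.mul_le_mul_right _ h6
        omega
    have hwsum : T.card * (p+1) ≤ m * (k-1) := by
      have h1 : ∑ i : Fin m, (T.filter (fun t => (t.1 - i).val ≤ p)).card = T.card * (p+1) := by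
        calc ∑ i : Fin m, (T.filter (fun t => (t.1 - i).val ≤ p)).card
            = ∑ i : Fin m, ∑ t ∈ T, if (t.1 - i).val ≤ p then 1 else 0 :=
              Finset.sum_congr rfl (fun i _ => Finset.card_filter _ _)
          _ = ∑ t ∈ T, ∑ i : Fin m, if (t.1 - i).val ≤ p then 1 else 0 := Finset.sum_comm
          _ = ∑ t ∈ T, ((univ : Finset (Fin m)).filter (fun i => (t.1 - i).val ≤ p)).card := by
              refine Finset.sum_congr rfl (fun t _ => ?_)
              rw [Finset.card_filter]
          _ = ∑ t ∈ T, (p+1) := by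
              refine Finset.sum_congr rfl (fun t _ => ?_)
              rw [card_window, min_eq_right (by omega)]
          _ = T.card * (p+1) := by rw [Finset.sum_const, smul_eq_mul]
      calc T.card * (p+1) = ∑ i : Fin m, (T.filter (fun t => (t.1 - i).val ≤ p)).card := h1.symm
        _ ≤ ∑ _i : Fin m, (k-1) := Finset.sum_le_sum (fun i _ => hwin i)
        _ = m * (k-1) := by rw [Finset.sum_const, Finset.card_univ, Fintype.card_fin, smul_eq_mul]
    -- combine
    have hcomb : m * (k * (p+1)) ≤ m * (D * (k-1)) := by
      calc m * (k * (p+1)) = (m * k) * (p+1) := by ring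
        _ ≤ (T.card * min m D) * (p+1) := Nat.mul_le_mul_right _ htotal
        _ = (min m D) * (T.card * (p+1)) := by ring
        _ ≤ (min m D) * (m * (k-1)) := Nat.mul_le_mul_left _ hwsum
        _ ≤ D * (m * (k-1)) := Nat.mul_le_mul_right _ (min_le_right _ _)
        _ = m * (D * (k-1)) := by ring
    have hfin : k * (p+1) ≤ D * (k-1) := Nat.le_of_mul_le_mul_left hcomb (by omega)
    -- contradiction with (k-1)*D < n and n+1 ≤ k*(p+1)
    have hco : (k-1) * D = D * (k-1) := Nat.mul_comm _ _
    omega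
  · -- p + 1 > m : all second coordinates form a packing
    have hfstle : ∀ t ∈ T, ∀ t' ∈ T, t ≠ t' → p + 1 ≤ cdist t.2 t'.2 := by
      intro t ht t' ht' htt'
      have := hpack t ht t' ht' htt'
      rcases eq_or_ne t.1 t'.1 with h | h
      · have : cdist t.1 t'.1 = 0 := by rw [h]; simp [cdist]
        omega
      · have := cdist_lt_card t.1 t'.1 h
        omega
    have hsndinj : Set.InjOn Prod.snd (T : Set (Fin m × Fin n)) := by
      intro t ht t' ht' heq
      by_contra htne
      have := hfstle t (by simpa using ht) t' (by simpa using ht') htne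
      rw [heq] at this
      have : cdist t'.2 t'.2 = 0 := by simp [cdist]
      omega
    set P := T.image Prod.snd with hP
    have hcardP : P.card = T.card := Finset.card_image_of_injOn hsndinj
    have hPpack : ∀ x ∈ P, ∀ y ∈ P, x ≠ y → p + 1 ≤ cdist x y := by
      intro x hx y hy hxy
      obtain ⟨t, ht, rfl⟩ := Finset.mem_image.mp hx
      obtain ⟨t', ht', rfl⟩ := Finset.mem_image.mp hy
      exact hfstle t ht t' ht' (fun h => hxy (by rw [h]))
    have hTk : k ≤ T.card := by
      have h1 : T.card * min m D ≤ T.card * m := Nat.mul_le_mul_left _ (min_le_left _ _)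
      have h2 : m * k ≤ T.card * m := le_trans htotal h1
      have h3 : T.card * m = m * T.card := Nat.mul_comm _ _
      have h4 : m * k ≤ m * T.card := by omega
      exact Nat.le_of_mul_le_mul_left h4 (by omega)
    obtain ⟨x, hx, y, hy, hxy⟩ := Finset.one_lt_card.mp (show 1 < P.card by omega)
    have hpn : p + 1 ≤ n := by
      have h3 := hPpack x hx y hy hxy
      have h4 := cdist_lt_card x y hxy
      omega
    have h5 := packing_count hPpack hpn
    have h7 : k * (p+1) ≤ P.card * (p+1) := Nat.mul_le_mul_right _ (by omega)
    omega

end torus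

theorem gamma_torus_eq_of_residue (d p : ℕ) (m n : ℕ) (hm : 3 ≤ m) (hn : 3 ≤ n)
    (h : (2 * d + 1 - n % (2 * d + 1)) * ((m + 2 * d) / (2 * d + 1)) < 2 * d + 1) :
    distPackDomNum (strongProd (cycleGraph m) (cycleGraph n)) d p =
      distPackDomNum (cycleGraph m) d p * distPackDomNum (cycleGraph n) d p := by
  haveI : NeZero m := ⟨by omega⟩
  haveI : NeZero n := ⟨by omega⟩
  haveI : Nonempty (Fin m) := ⟨⟨0, by omega⟩⟩
  haveI : Nonempty (Fin n) := ⟨⟨0, by omega⟩⟩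
  obtain ⟨hq1, hmq, hqm⟩ := ceil_facts m d (by omega)
  obtain ⟨hk1, hnk, hkn⟩ := ceil_facts n d (by omega)
  by_cases hqf : (m + 2*d)/(2*d+1) = 1 ∨ ((m + 2*d)/(2*d+1)) * (p+1) ≤ m
  · by_cases hkf : (n + 2*d)/(2*d+1) = 1 ∨ ((n + 2*d)/(2*d+1)) * (p+1) ≤ n
    · -- both cycles feasible : everything finite
      rw [cycle_gamma_finite hm hqf, cycle_gamma_finite hn hkf, ← Nat.cast_mul]
      apply le_antisymm
      · obtain ⟨S, hS, hSdom, hSpack⟩ := exists_balanced d p hm hqf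
        obtain ⟨T, hT, hTdom, hTpack⟩ := exists_balanced d p hn hkf
        have hd : IsDistDomSet (strongProd (cycleGraph m) (cycleGraph n)) d (S ×ˢ T) := by
          rw [isDistDom_torus_iff hm hn]
          intro x
          obtain ⟨u, hu, hud⟩ := hSdom x.1
          obtain ⟨v, hv, hvd⟩ := hTdom x.2
          exact ⟨(u, v), Finset.mem_product.mpr ⟨hu, hv⟩, by simp [hud, hvd]⟩
        have hp : IsPacking (strongProd (cycleGraph m) (cycleGraph n)) p (S ×ˢ T) := by
          rw [isPacking_torus_iff hm hn]
          intro x hx y hy hxy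
          obtain ⟨hx1, hx2⟩ := Finset.mem_product.mp hx
          obtain ⟨hy1, hy2⟩ := Finset.mem_product.mp hy
          rcases eq_or_ne x.1 y.1 with he | he
          · have he2 : x.2 ≠ y.2 := by
              intro h2
              exact hxy (Prod.ext he h2)
            have := hTpack x.2 hx2 y.2 hy2 he2
            exact le_trans this (le_max_right _ _)
          · have := hSpack x.1 hx1 y.1 hy1 he
            exact le_trans this (le_max_left _ _)
        have hle := distPackDomNum_le _ d p hd hp
        rwa [Finset.card_product, hS, hT] at hle
      · apply le_distPackDomNum
        intro T h1 h2
        have hdom := (isDistDom_torus_iff hm hn).mp h1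
        have hcount := torus_column_count hm hdom
        exact torus_arith n d ((m + 2*d)/(2*d+1)) ((n + 2*d)/(2*d+1)) T.card hn hq1 h rfl hcount
    · -- second factor infeasible : both sides are ⊤
      push_neg at hkf
      have hk2 : 2 ≤ (n + 2*d)/(2*d+1) := by omega
      have hinf : n + 1 ≤ ((n + 2*d)/(2*d+1)) * (p+1) := by omega
      rw [cycle_gamma_top hn hk2 hinf,
        ENat.mul_top (distPackDomNum_ne_zero (cycleGraph m) d p)]
      apply distPackDomNum_eq_top
      intro T h1 h2
      exact torus_no_witness hm hn hk2 hinf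
        ((isDistDom_torus_iff hm hn).mp h1) ((isPacking_torus_iff hm hn).mp h2)
  · -- first factor infeasible : both sides are ⊤
    push_neg at hqf
    have hq2 : 2 ≤ (m + 2*d)/(2*d+1) := by omega
    have hinf : m + 1 ≤ ((m + 2*d)/(2*d+1)) * (p+1) := by omega
    rw [cycle_gamma_top hm hq2 hinf,
      ENat.top_mul (distPackDomNum_ne_zero (cycleGraph n) d p)]
    apply distPackDomNum_eq_top
    intro T h1 h2
    have hdom := (isDistDom_torus_iff hm hn).mp h1
    have hpack := (isPacking_torus_iff hm hn).mp h2
    refine torus_no_witness hn hm hq2 hinf (T := T.image Prod.swap) ?_ ?_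
    · intro x
      obtain ⟨t, ht, htd⟩ := hdom (x.2, x.1)
      refine ⟨(t.2, t.1), Finset.mem_image.mpr ⟨t, ht, rfl⟩, ?_⟩
      simpa [max_comm] using htd
    · intro x hx y hy hxy
      obtain ⟨t, ht, rfl⟩ := Finset.mem_image.mp hx
      obtain ⟨t', ht', rfl⟩ := Finset.mem_image.mp hy
      have htt' : t ≠ t' := by
        intro hteq
        exact hxy (by rw [hteq])
      have := hpack t ht t' ht' htt'
      simpa [max_comm] using this
end
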